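/- Let i be the unit current on a finite connected weighted graph (G,C) with source a and sink b (a ≠ b). Then for every ordered pair (x,y), i(x,y) equals E_a[Σ_{t=1}^{τ_b} 1{X_{t−1}=x, X_t=y}] − E_a[Σ_{t=1}^{τ_b} 1{X_{t−1}=y, X_t=x}], the expected net number of crossings of the edge {x,y} from x to y by the weighted random walk started at a and stopped at b; in particular |i(x,y)| ≤ 1 for all x,y. -/

import Mathlib

open MeasureTheory

noncomputable section

/-- Transition probability `P(x, y; C)` of the weighted random walk with weights `C`. -/
def step {V : Type*} (G : SimpleGraph V) (C : V → V → ℝ) (x y : V) : ℝ :=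
  open scoped Classical in
  if G.Adj x y then C x y / ∑' z, (if G.Adj x z then C x z else 0) else 0

/-- A unit flow from `src` to `snk` on a finite graph: antisymmetric, supported on
edges, with zero divergence away from `src` and `snk` and divergence `1` at `src`. -/
def IsUnitFlowF {V : Type*} [Fintype V] (G : SimpleGraph V) (src : V) (snk : Set V)
    (j : V → V → ℝ) : Prop :=
  (∀ x y, j x y = -j y x) ∧
  (∀ x y, ¬G.Adj x y → j x y = 0) ∧
  (∀ x, x ≠ src → x ∉ snk → ∑ y, j x y = 0) ∧
  (∑ y, j src y = 1)

/-- The energy `∑_e j(e)² R(e)` of a flow (edges counted once). -/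
def energyF {V : Type*} [Fintype V] (R : V → V → ℝ) (j : V → V → ℝ) : ℝ :=
  (1 / 2) * ∑ x, ∑ y, (j x y) ^ 2 * R x y

/-- The unit current: the unit flow minimizing the energy (Thompson's principle). -/
def IsUnitCurrent {V : Type*} [Fintype V] (G : SimpleGraph V) (src : V) (snk : Set V)
    (R : V → V → ℝ) (i : V → V → ℝ) : Prop :=
  IsUnitFlowF G src snk i ∧
  ∀ j, IsUnitFlowF G src snk j → energyF R i ≤ energyF R j

namespace Stmt12
open scoped Classical
set_option linter.unusedSectionVars false

variable {V Ω : Type*} [Fintype V] [DecidableEq V] [MeasurableSpace V]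
    [MeasurableSingletonClass V] {mΩ : MeasurableSpace Ω}

/-- the event of avoiding `b` up to time `t` -/
def noB (X : ℕ → Ω → V) (b : V) (t : ℕ) : Set Ω := {ω | ∀ s ≤ t, X s ω ≠ b}

/-- at `x` at time `t`, never having hit `b` -/
def Av (X : ℕ → Ω → V) (b : V) (t : ℕ) (x : V) : Set Ω := {ω | X t ω = x} ∩ noB X b t

variable {μ : Measure Ω} [IsProbabilityMeasure μ] {G : SimpleGraph V} {C : V → V → ℝ}
  {b : V} {X : ℕ → Ω → V} {ℱ : Filtration ℕ mΩ}

lemma measurable_eq (hXmeas : ∀ t, Measurable (X t)) (t : ℕ) (x : V) :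
    MeasurableSet {ω | X t ω = x} := hXmeas t (measurableSet_singleton x)

lemma noB_meas (hXmeas : ∀ t, Measurable (X t)) (t : ℕ) :
    MeasurableSet (noB X b t) := by
  have : noB X b t = ⋂ s ∈ Set.Iic t, {ω | X s ω = b}ᶜ := by
    ext ω; simp [noB, Set.mem_iInter]
  rw [this]
  exact MeasurableSet.biInter (Set.to_countable _)
    (fun s _ => (measurable_eq hXmeas s b).compl)

lemma Av_meas (hXmeas : ∀ t, Measurable (X t)) (t : ℕ) (x : V) :
    MeasurableSet (Av X b t x) := (measurable_eq hXmeas t x).inter (noB_meas hXmeas t)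

lemma mem_filtration (hℱ : ∀ t, ℱ t = ⨆ s ∈ Set.Iic t, MeasurableSpace.comap (X s) inferInstance)
    {s t : ℕ} (hst : s ≤ t) (x : V) : MeasurableSet[ℱ t] {ω | X s ω = x} := by
  have h1 : MeasurableSpace.comap (X s) inferInstance ≤ ℱ t := by
    rw [hℱ t]; exact le_iSup₂ (f := fun s (_ : s ∈ Set.Iic t) => MeasurableSpace.comap (X s) inferInstance) s hst
  exact h1 _ ⟨{x}, measurableSet_singleton x, rfl⟩

lemma noB_mem_filtration (hℱ : ∀ t, ℱ t = ⨆ s ∈ Set.Iic t, MeasurableSpace.comap (X s) inferInstance)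
    (t : ℕ) : MeasurableSet[ℱ t] (noB X b t) := by
  have : noB X b t = ⋂ s ∈ Set.Iic t, {ω | X s ω = b}ᶜ := by
    ext ω; simp [noB, Set.mem_iInter]
  rw [this]
  exact MeasurableSet.biInter (Set.to_countable _)
    (fun s hs => (mem_filtration hℱ hs b).compl)

lemma Av_mem_filtration (hℱ : ∀ t, ℱ t = ⨆ s ∈ Set.Iic t, MeasurableSpace.comap (X s) inferInstance)
    (t : ℕ) (x : V) : MeasurableSet[ℱ t] (Av X b t x) :=
  (mem_filtration hℱ le_rfl x).inter (noB_mem_filtration hℱ t)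

/-- one-step Markov property -/
lemma markov_step (hXmeas : ∀ t, Measurable (X t))
    (hdyn : ∀ t y, μ[(fun ω => if X (t + 1) ω = y then (1 : ℝ) else 0) | ℱ t]
        =ᵐ[μ] fun ω => step G C (X t ω) y)
    (t : ℕ) (x y : V) (A : Set Ω) (hA : MeasurableSet[ℱ t] A)
    (hAx : A ⊆ {ω | X t ω = x}) :
    (μ (A ∩ {ω | X (t + 1) ω = y})).toReal = step G C x y * (μ A).toReal := by
  have hle := ℱ.le t
  have hAm : MeasurableSet A := hle _ hA
  have hsm : MeasurableSet {ω | X (t + 1) ω = y} := measurable_eq hXmeas (t+1) y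
  set f : Ω → ℝ := fun ω => if X (t + 1) ω = y then (1 : ℝ) else 0 with hf
  have hfeq : f = Set.indicator {ω | X (t + 1) ω = y} (fun _ => (1:ℝ)) := by
    funext ω; simp [hf, Set.indicator_apply, Set.mem_setOf_eq]
  have hf_int : Integrable f μ := by
    rw [hfeq]; exact (integrable_const (1:ℝ)).indicator hsm
  have h1 : ∫ ω in A, f ω ∂μ = (μ (A ∩ {ω | X (t + 1) ω = y})).toReal := by
    rw [hfeq, setIntegral_indicator hsm, setIntegral_const, Set.inter_comm]
    simp
    rfl
  have h2 : ∫ ω in A, (μ[f|ℱ t]) ω ∂μ = ∫ ω in A, f ω ∂μ :=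
    setIntegral_condExp hle hf_int hA
  have h3 : ∫ ω in A, (μ[f|ℱ t]) ω ∂μ = ∫ ω in A, step G C (X t ω) y ∂μ :=
    setIntegral_congr_ae hAm ((hdyn t y).mono fun ω h _ => h)
  have h4 : ∫ ω in A, step G C (X t ω) y ∂μ = ∫ ω in A, step G C x y ∂μ :=
    setIntegral_congr_fun hAm (fun ω hω => by rw [Set.mem_setOf_eq.mp (hAx hω)])
  have h5 : ∫ ω in A, step G C x y ∂μ = step G C x y * (μ A).toReal := by
    rw [setIntegral_const, smul_eq_mul, mul_comm]
    rfl
  rw [← h1, ← h2, h3, h4, h5]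


def follow (X : ℕ → Ω → V) {G : SimpleGraph V} :
    ∀ {u v : V}, G.Walk u v → ℕ → Set Ω
  | _, _, SimpleGraph.Walk.nil, _ => Set.univ
  | _, _, SimpleGraph.Walk.cons (v := w) _ p, t =>
      {ω | X (t + 1) ω = w} ∩ follow X p (t + 1)

def wprob (G : SimpleGraph V) (C : V → V → ℝ) : ∀ {u v : V}, G.Walk u v → ℝ
  | _, _, SimpleGraph.Walk.nil => 1
  | u, _, SimpleGraph.Walk.cons (v := w) _ p => step G C u w * wprob G C p

variable {μ : Measure Ω} [IsProbabilityMeasure μ] {G : SimpleGraph V} {C : V → V → ℝ}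
  {b : V} {X : ℕ → Ω → V} {ℱ : Filtration ℕ mΩ}

def pi' (G : SimpleGraph V) (C : V → V → ℝ) (x : V) : ℝ :=
  ∑ z, (if G.Adj x z then C x z else 0)

lemma step_eq (x y : V) :
    step G C x y = if G.Adj x y then C x y / pi' G C x else 0 := by
  rw [step, pi', tsum_fintype]

lemma pi'_nonneg (hpos : ∀ x y, G.Adj x y → 0 < C x y) (x : V) : 0 ≤ pi' G C x :=
  Finset.sum_nonneg fun z _ => by
    by_cases h : G.Adj x z <;> simp [h, le_of_lt, hpos x z]

lemma pi'_pos (hpos : ∀ x y, G.Adj x y → 0 < C x y) {x z : V} (h : G.Adj x z) :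
    0 < pi' G C x := by
  have h1 : C x z ≤ pi' G C x := by
    have := Finset.single_le_sum (f := fun z => if G.Adj x z then C x z else 0)
      (fun w _ => by by_cases hw : G.Adj x w <;> simp [hw, le_of_lt, hpos x w]) (Finset.mem_univ z)
    simpa [h, pi'] using this
  exact lt_of_lt_of_le (hpos x z h) h1

lemma step_pos (hpos : ∀ x y, G.Adj x y → 0 < C x y) {x y : V} (h : G.Adj x y) :
    0 < step G C x y := by
  rw [step_eq]; simp only [h, if_true]
  exact div_pos (hpos x y h) (pi'_pos hpos h)

lemma step_nonneg (hpos : ∀ x y, G.Adj x y → 0 < C x y) (x y : V) :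
    0 ≤ step G C x y := by
  rw [step_eq]
  by_cases h : G.Adj x y
  · simp only [h, if_true]; exact div_nonneg (hpos x y h).le (pi'_nonneg hpos x)
  · simp [h]

lemma wprob_pos (hpos : ∀ x y, G.Adj x y → 0 < C x y) {u v : V} (p : G.Walk u v) :
    0 < wprob G C p := by
  induction p with
  | nil => norm_num [wprob]
  | cons h p ih => exact mul_pos (step_pos hpos h) ih

lemma follow_meas (hXmeas : ∀ t, Measurable (X t)) {u v : V} (p : G.Walk u v) (t : ℕ) :
    MeasurableSet (follow X p t) := by
  induction p generalizing t with
  | nil => simp [follow]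
  | cons h p ih =>
      exact ((hXmeas _) (measurableSet_singleton _)).inter (ih (t + 1))

lemma follow_end {u v : V} (p : G.Walk u v) (t : ℕ) {ω : Ω} (hω : ω ∈ follow X p t)
    (hu : X t ω = u) : X (t + p.length) ω = v := by
  induction p generalizing t with
  | nil => simpa using hu
  | cons h p ih =>
      obtain ⟨h1, h2⟩ := hω
      have := ih (t + 1) h2 h1
      simpa [SimpleGraph.Walk.length_cons, Nat.add_comm, Nat.add_assoc, Nat.add_left_comm] using this


/-- iterated Markov property along a walk -/
lemma markov_walk (hXmeas : ∀ t, Measurable (X t))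
    (hdyn : ∀ t y, μ[(fun ω => if X (t + 1) ω = y then (1 : ℝ) else 0) | ℱ t]
        =ᵐ[μ] fun ω => step G C (X t ω) y)
    (hℱ : ∀ t, ℱ t = ⨆ s ∈ Set.Iic t, MeasurableSpace.comap (X s) inferInstance)
    {u v : V} (p : G.Walk u v) (t : ℕ) (A : Set Ω) (hA : MeasurableSet[ℱ t] A)
    (hAx : A ⊆ {ω | X t ω = u}) :
    (μ (A ∩ follow X p t)).toReal = wprob G C p * (μ A).toReal := by
  induction p generalizing t A with
  | nil => simp [follow, wprob]
  | @cons u w v h p ih =>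
      have key := markov_step (μ := μ) (ℱ := ℱ) hXmeas hdyn t u w A hA hAx
      have hA' : MeasurableSet[ℱ (t+1)] (A ∩ {ω | X (t + 1) ω = w}) :=
        ((ℱ.mono (Nat.le_succ t)) _ hA).inter (mem_filtration hℱ le_rfl w)
      have := ih (t + 1) (A ∩ {ω | X (t + 1) ω = w}) hA' (Set.inter_subset_right)
      rw [show A ∩ follow X (SimpleGraph.Walk.cons h p) t
            = (A ∩ {ω | X (t + 1) ω = w}) ∩ follow X p (t + 1) by
          simp [follow, Set.inter_assoc], this, key, wprob]
      ring


lemma measure_partition (hXmeas : ∀ t, Measurable (X t)) (t : ℕ) {S : Set Ω}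
    (hS : MeasurableSet S) :
    (μ S).toReal = ∑ x, (μ (S ∩ {ω | X t ω = x})).toReal := by
  have h1 : S = ⋃ x ∈ Finset.univ, S ∩ {ω | X t ω = x} := by
    ext ω; simp
  have h2 : μ S = ∑ x, μ (S ∩ {ω | X t ω = x}) := by
    conv_lhs => rw [h1]
    refine measure_biUnion_finset ?_ ?_
    · intro x _ y _ hxy
      refine Set.disjoint_left.2 fun ω hx hy => hxy ?_
      rw [← hx.2, ← hy.2]
    · exact fun x _ => hS.inter ((hXmeas t) (measurableSet_singleton x))
  rw [h2, ENNReal.toReal_sum]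
  exact fun x _ => measure_ne_top μ _

lemma step_le_one (hpos : ∀ x y, G.Adj x y → 0 < C x y) (x y : V) :
    step G C x y ≤ 1 := by
  rw [step_eq]
  by_cases h : G.Adj x y
  · simp only [h, if_true]
    rw [div_le_one (pi'_pos hpos h)]
    have := Finset.single_le_sum (f := fun z => if G.Adj x z then C x z else 0)
      (fun w _ => by by_cases hw : G.Adj x w <;> simp [hw, le_of_lt, hpos x w]) (Finset.mem_univ y)
    simpa [h, pi'] using this
  · simp [h]

lemma wprob_le_one (hpos : ∀ x y, G.Adj x y → 0 < C x y) {u v : V} (p : G.Walk u v) :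
    wprob G C p ≤ 1 := by
  induction p with
  | nil => norm_num [wprob]
  | @cons u w v h p ih =>
      rw [wprob]
      calc step G C u w * wprob G C p ≤ 1 * 1 :=
            mul_le_mul (step_le_one hpos u w) ih (wprob_pos hpos p).le one_pos.le
        _ = 1 := by ring

lemma noB_antitone {s t : ℕ} (hst : s ≤ t) : noB X b t ⊆ noB X b s :=
  fun ω hω r hr => hω r (le_trans hr hst)

lemma summable_q (hconn : G.Connected) (hpos : ∀ x y, G.Adj x y → 0 < C x y)
    (hXmeas : ∀ t, Measurable (X t))
    (hdyn : ∀ t y, μ[(fun ω => if X (t + 1) ω = y then (1 : ℝ) else 0) | ℱ t]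
        =ᵐ[μ] fun ω => step G C (X t ω) y)
    (hℱ : ∀ t, ℱ t = ⨆ s ∈ Set.Iic t, MeasurableSpace.comap (X s) inferInstance) :
    Summable (fun t => (μ (noB X b t)).toReal) := by
  haveI : Nonempty V := ⟨b⟩
  set q : ℕ → ℝ := fun t => (μ (noB X b t)).toReal with hq
  -- choose walks to b
  have hP : ∀ x : V, G.Walk x b := fun x => Classical.choice (hconn.preconnected x b)
  set P : ∀ x : V, G.Walk x b := hP with hPdef
  set n : ℕ := 1 + Finset.univ.sup (fun x => (P x).length) with hn
  have hn1 : 1 ≤ n := Nat.le_add_right 1 _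
  have hlen : ∀ x, (P x).length ≤ n := by
    intro x
    have h1 : (P x).length ≤ Finset.univ.sup (fun x => (P x).length) :=
      Finset.le_sup (f := fun x => (P x).length) (Finset.mem_univ x)
    omega
  set ε : ℝ := Finset.univ.inf' Finset.univ_nonempty (fun x => wprob G C (P x)) with hε
  have hεpos : 0 < ε := by
    rw [hε]
    exact (Finset.lt_inf'_iff _).mpr fun x _ => wprob_pos hpos (P x)
  have hεle : ε ≤ 1 := by
    obtain ⟨x0, hx0⟩ := Finset.univ_nonempty (α := V)
    exact le_trans (Finset.inf'_le _ (Finset.mem_univ x0)) (wprob_le_one hpos (P x0))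
  have hqnn : ∀ t, 0 ≤ q t := fun t => ENNReal.toReal_nonneg
  have hqle : ∀ s t, s ≤ t → q t ≤ q s := fun s t hst =>
    ENNReal.toReal_mono (measure_ne_top μ _) (measure_mono (noB_antitone hst))
  have hq1 : ∀ t, q t ≤ 1 := fun t => by
    rw [hq]
    exact ENNReal.toReal_le_of_le_ofReal one_pos.le (by simpa using prob_le_one)
  -- decay
  have decay : ∀ t, q (t + n) ≤ (1 - ε) * q t := by
    intro t
    have key : ∀ x : V, (μ (noB X b (t + n) ∩ {ω | X t ω = x})).toReal
        ≤ (1 - ε) * (μ (Av X b t x)).toReal := by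
      intro x
      by_cases hxb : x = b
      · have h0 : noB X b (t + n) ∩ {ω | X t ω = x} = ∅ := by
          ext ω; simp only [Set.mem_inter_iff, Set.mem_empty_iff_false, iff_false]
          rintro ⟨h1, h2⟩
          exact h1 t (Nat.le_add_right t n) (by rw [h2, hxb])
        rw [h0]
        simp only [measure_empty, ENNReal.toReal_zero]
        exact mul_nonneg (by linarith) ENNReal.toReal_nonneg
      · set A := Av X b t x with hA
        set E := A ∩ follow X (P x) t with hE
        have hAm : MeasurableSet A := Av_meas hXmeas t x
        have hEm : MeasurableSet E := hAm.inter (follow_meas hXmeas (P x) t)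
        have hEA : E ⊆ A := Set.inter_subset_left
        have hμE : (μ E).toReal = wprob G C (P x) * (μ A).toReal :=
          markov_walk hXmeas hdyn hℱ (P x) t A (Av_mem_filtration hℱ t x)
            Set.inter_subset_left
        have hsub : noB X b (t + n) ∩ {ω | X t ω = x} ⊆ A \ E := by
          intro ω ⟨h1, h2⟩
          refine ⟨⟨h2, noB_antitone (Nat.le_add_right t n) h1⟩, ?_⟩
          intro hωE
          have hend := follow_end (P x) t hωE.2 hωE.1.1
          exact h1 (t + (P x).length) (by have := hlen x; omega) hend
        have hdiff : (μ (A \ E)).toReal = (μ A).toReal - (μ E).toReal := by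
          rw [measure_diff hEA hEm.nullMeasurableSet (measure_ne_top μ _)]
          exact ENNReal.toReal_sub_of_le (measure_mono hEA) (measure_ne_top μ _)
        calc (μ (noB X b (t + n) ∩ {ω | X t ω = x})).toReal
            ≤ (μ (A \ E)).toReal :=
              ENNReal.toReal_mono (measure_ne_top μ _) (measure_mono hsub)
          _ = (μ A).toReal - (μ E).toReal := hdiff
          _ ≤ (μ A).toReal - ε * (μ A).toReal := by
              have : ε * (μ A).toReal ≤ (μ E).toReal := by
                rw [hμE]
                exact mul_le_mul_of_nonneg_right
                  (Finset.inf'_le _ (Finset.mem_univ x)) ENNReal.toReal_nonneg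
              linarith
          _ = (1 - ε) * (μ A).toReal := by ring
    have h1 : q (t + n) = ∑ x, (μ (noB X b (t + n) ∩ {ω | X t ω = x})).toReal :=
      measure_partition hXmeas t (noB_meas hXmeas (t + n))
    have h2 : q t = ∑ x, (μ (Av X b t x)).toReal := by
      show (μ (noB X b t)).toReal = _
      rw [measure_partition hXmeas t (noB_meas hXmeas t)]
      exact Finset.sum_congr rfl fun x _ => by rw [Av, Set.inter_comm]
    rw [h1, h2, Finset.mul_sum]
    exact Finset.sum_le_sum fun x _ => key x
  -- iterate decay
  have hr : ∀ k, q (n * k) ≤ (1 - ε) ^ k := by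
    intro k
    induction k with
    | zero => simpa using hq1 0
    | succ k ih =>
        have : q (n * (k + 1)) = q (n * k + n) := by ring_nf
        rw [this, pow_succ]
        calc q (n * k + n) ≤ (1 - ε) * q (n * k) := decay (n * k)
          _ ≤ (1 - ε) * (1 - ε) ^ k := by
              apply mul_le_mul_of_nonneg_left ih (by linarith)
          _ = (1 - ε) ^ k * (1 - ε) := by ring
  -- partial sums bounded
  have key2 : ∀ m, ∑ i ∈ Finset.range (n * m), q i
      ≤ ∑ k ∈ Finset.range m, (n : ℝ) * (1 - ε) ^ k := by
    intro m
    induction m with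
    | zero => simp
    | succ m ihm =>
        rw [Nat.mul_succ, Finset.sum_range_add, Finset.sum_range_succ]
        refine add_le_add ihm ?_
        calc ∑ j ∈ Finset.range n, q (n * m + j)
            ≤ ∑ _j ∈ Finset.range n, q (n * m) :=
              Finset.sum_le_sum fun j _ => hqle _ _ (Nat.le_add_right _ j)
          _ = (n : ℝ) * q (n * m) := by
              rw [Finset.sum_const, Finset.card_range, nsmul_eq_mul]
          _ ≤ (n : ℝ) * (1 - ε) ^ m :=
              mul_le_mul_of_nonneg_left (hr m) (Nat.cast_nonneg n)
  apply summable_of_sum_range_le (c := (n : ℝ) * (1 / ε)) hqnn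
  intro m
  have hmn : m ≤ n * m := Nat.le_mul_of_pos_left m (by omega)
  have hgeo : ∑ k ∈ Finset.range m, (1 - ε) ^ k ≤ 1 / ε := by
    have hne : (1 : ℝ) - ε ≠ 1 := by linarith
    rw [geom_sum_eq hne m]
    have h2 : (0:ℝ) ≤ (1 - ε) ^ m := pow_nonneg (by linarith) m
    have h3 : ((1 - ε) ^ m - 1) / (1 - ε - 1) = (1 - (1 - ε) ^ m) / ε := by
      rw [div_eq_div_iff (by linarith) (by linarith)]
      ring
    rw [h3]
    gcongr
    linarith
  calc ∑ i ∈ Finset.range m, q i ≤ ∑ i ∈ Finset.range (n * m), q i := by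
        apply Finset.sum_le_sum_of_subset_of_nonneg (Finset.range_subset_range.mpr hmn)
        exact fun i _ _ => hqnn i
    _ ≤ ∑ k ∈ Finset.range m, (n : ℝ) * (1 - ε) ^ k := key2 m
    _ = (n : ℝ) * ∑ k ∈ Finset.range m, (1 - ε) ^ k := (Finset.mul_sum _ _ _).symm
    _ ≤ (n : ℝ) * (1 / ε) := mul_le_mul_of_nonneg_left hgeo (Nat.cast_nonneg n)


def gre (μ : Measure Ω) (X : ℕ → Ω → V) (b x : V) : ℝ :=
  ∑' t, (μ (Av X b t x)).toReal

def Jf (μ : Measure Ω) (X : ℕ → Ω → V) (b x y : V) : ℝ :=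
  ∑' t, (μ (Av X b t x ∩ {ω | X (t + 1) ω = y})).toReal

variable (hconn : G.Connected) (hpos : ∀ x y, G.Adj x y → 0 < C x y)
  (hXmeas : ∀ t, Measurable (X t))
  (hdyn : ∀ t y, μ[(fun ω => if X (t + 1) ω = y then (1 : ℝ) else 0) | ℱ t]
      =ᵐ[μ] fun ω => step G C (X t ω) y)
  (hℱ : ∀ t, ℱ t = ⨆ s ∈ Set.Iic t, MeasurableSpace.comap (X s) inferInstance)

include hconn hpos hXmeas hdyn hℱ

lemma summable_Av (x : V) : Summable (fun t => (μ (Av X b t x)).toReal) := by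
  apply Summable.of_nonneg_of_le (fun t => ENNReal.toReal_nonneg)
    (fun t => ENNReal.toReal_mono (measure_ne_top μ _)
      (measure_mono (Set.inter_subset_right)))
    (summable_q hconn hpos hXmeas hdyn hℱ)

lemma summable_Jterm (x y : V) :
    Summable (fun t => (μ (Av X b t x ∩ {ω | X (t + 1) ω = y})).toReal) := by
  apply Summable.of_nonneg_of_le (fun t => ENNReal.toReal_nonneg)
    (fun t => ENNReal.toReal_mono (measure_ne_top μ _)
      (measure_mono (Set.inter_subset_left)))
    (summable_Av hconn hpos hXmeas hdyn hℱ x)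

lemma Jf_eq (x y : V) : Jf μ X b x y = step G C x y * gre μ X b x :=  by
  have h : ∀ t, (μ (Av X b t x ∩ {ω | X (t + 1) ω = y})).toReal
      = step G C x y * (μ (Av X b t x)).toReal := fun t =>
    markov_step hXmeas hdyn t x y (Av X b t x) (Av_mem_filtration hℱ t x)
      Set.inter_subset_left
  rw [Jf, gre, ← tsum_mul_left]
  exact tsum_congr h

lemma gre_nonneg (x : V) : 0 ≤ gre μ X b x :=
  tsum_nonneg fun t => ENNReal.toReal_nonneg

lemma gre_b : gre μ X b b = 0 := by
  rw [gre]
  convert tsum_zero with t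
  have : Av X b t b = ∅ := by
    ext ω
    simp only [Av, noB, Set.mem_inter_iff, Set.mem_setOf_eq, Set.mem_empty_iff_false, iff_false]
    rintro ⟨h1, h2⟩
    exact h2 t le_rfl h1
  simp [this]

lemma sum_Jf_right (x : V) : ∑ y, Jf μ X b x y = gre μ X b x := by
  rw [gre]
  have hswap : ∑ y, Jf μ X b x y
      = ∑' t, ∑ y, (μ (Av X b t x ∩ {ω | X (t + 1) ω = y})).toReal := by
    simp only [Jf]
    exact (Summable.tsum_finsetSum fun y _ => summable_Jterm hconn hpos hXmeas hdyn hℱ x y).symm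
  rw [hswap]
  refine tsum_congr fun t => ?_
  exact (measure_partition hXmeas (t + 1) (Av_meas hXmeas t x)).symm

lemma sum_Jf_left (hX0 : ∀ᵐ ω ∂μ, X 0 ω = a) (hab : a ≠ b) {x : V} (hxb : x ≠ b) :
    ∑ y, Jf μ X b y x = gre μ X b x - (if x = a then 1 else 0) := by
  have hterm : ∀ t, ∑ y, (μ (Av X b t y ∩ {ω | X (t + 1) ω = x})).toReal
      = (μ (Av X b (t + 1) x)).toReal := by
    intro t
    have hS : MeasurableSet (noB X b t ∩ {ω | X (t + 1) ω = x}) :=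
      (noB_meas hXmeas t).inter (measurable_eq hXmeas (t + 1) x)
    have h1 := measure_partition (μ := μ) hXmeas t hS
    have h2 : ∀ y, noB X b t ∩ {ω | X (t + 1) ω = x} ∩ {ω | X t ω = y}
        = Av X b t y ∩ {ω | X (t + 1) ω = x} := by
      intro y
      ext ω
      simp only [Av, noB, Set.mem_inter_iff, Set.mem_setOf_eq]
      tauto
    have h3 : noB X b t ∩ {ω | X (t + 1) ω = x} = Av X b (t + 1) x := by
      ext ω
      simp only [Av, noB, Set.mem_inter_iff, Set.mem_setOf_eq]
      constructor
      · rintro ⟨h4, h5⟩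
        refine ⟨h5, fun s hs => ?_⟩
        rcases Nat.lt_or_ge s (t + 1) with hlt | hge
        · exact h4 s (by omega)
        · have : s = t + 1 := by omega
          rw [this, h5]; exact hxb
      · rintro ⟨h4, h5⟩
        exact ⟨fun s hs => h5 s (by omega), h4⟩
    rw [← h3]
    rw [h1]
    exact (Finset.sum_congr rfl fun y _ => by rw [h2 y]).symm
  have hsum : ∑ y, Jf μ X b y x = ∑' t, (μ (Av X b (t + 1) x)).toReal := by
    calc ∑ y, Jf μ X b y x
        = ∑' t, ∑ y, (μ (Av X b t y ∩ {ω | X (t + 1) ω = x})).toReal := by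
          simp only [Jf]
          exact (Summable.tsum_finsetSum fun y _ => summable_Jterm hconn hpos hXmeas hdyn hℱ y x).symm
      _ = ∑' t, (μ (Av X b (t + 1) x)).toReal := tsum_congr hterm
  have hs := summable_Av (b := b) hconn hpos hXmeas hdyn hℱ x
  have hA0 : (μ (Av X b 0 x)).toReal = if x = a then 1 else 0 := by
    have hnull : μ {ω | ¬ X 0 ω = a} = 0 := ae_iff.mp hX0
    by_cases hxa : x = a
    · subst hxa
      have haeq : Av X b 0 x =ᵐ[μ] Set.univ := by
        rw [Filter.eventuallyEq_set]
        filter_upwards [hX0] with ω h0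
        simp only [Av, noB, Set.mem_inter_iff, Set.mem_setOf_eq, Set.mem_univ, iff_true]
        exact ⟨h0, fun s hs' => by rw [Nat.le_zero.mp hs', h0]; exact hab⟩
      rw [measure_congr haeq]
      simp
    · have hsub : Av X b 0 x ⊆ {ω | ¬ X 0 ω = a} := fun ω hω => by
        simp only [Set.mem_setOf_eq]
        rw [hω.1]
        exact hxa
      rw [measure_mono_null hsub hnull]
      simp [hxa]
  have hshift : gre μ X b x
      = (μ (Av X b 0 x)).toReal + ∑' t, (μ (Av X b (t + 1) x)).toReal := by
    rw [gre]; exact Summable.tsum_eq_zero_add hs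
  rw [hsum, hshift, hA0]
  ring


end Stmt12

namespace Det
variable {V : Type*} [Fintype V] [DecidableEq V]

lemma antisym_total {d : V → V → ℝ} (hanti : ∀ x y, d x y = -d y x) :
    ∑ x, ∑ y, d x y = 0 := by
  have h1 : ∑ x, ∑ y, d x y = ∑ y, ∑ x, d x y := Finset.sum_comm
  have h2 : ∑ y, ∑ x, d x y = -∑ y, ∑ x, d y x := by
    simp only [← Finset.sum_neg_distrib]
    exact Finset.sum_congr rfl fun y _ => Finset.sum_congr rfl fun x _ => hanti x y
  linarith [h1, h2]

lemma unit_flow_div_all {G : SimpleGraph V} {a b : V} (hab : a ≠ b) {d : V → V → ℝ}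
    (hanti : ∀ x y, d x y = -d y x)
    (hdiv : ∀ x, x ≠ b → ∑ y, d x y = 0) :
    ∀ x, ∑ y, d x y = 0 := by
  intro x
  by_cases hxb : x = b
  · subst hxb
    have htot := antisym_total hanti
    have herase : ∑ z ∈ Finset.univ.erase x, ∑ y, d z y = 0 :=
      Finset.sum_eq_zero fun z hz => hdiv z (Finset.mem_erase.mp hz).1
    have := Finset.sum_erase_add Finset.univ (fun z => ∑ y, d z y) (Finset.mem_univ x)
    rw [herase] at this
    linarith [htot, this]
  · exact hdiv x hxb

/-- uniqueness of the energy minimizer given a competitor with a potential -/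
lemma current_eq {G : SimpleGraph V} {C : V → V → ℝ} {a b : V}
    (hpos : ∀ x y, G.Adj x y → 0 < C x y) (hab : a ≠ b)
    {i N : V → V → ℝ} (hi : IsUnitCurrent G a {b} (fun x y => 1 / C x y) i)
    (hN : IsUnitFlowF G a {b} N) {φ : V → ℝ}
    (hNφ : ∀ x y, G.Adj x y → N x y = C x y * (φ x - φ y)) :
    i = N := by
  obtain ⟨⟨hianti, hisupp, hidiv, hisrc⟩, hmin⟩ := hi
  obtain ⟨hNanti, hNsupp, hNdiv, hNsrc⟩ := hN
  set R : V → V → ℝ := fun x y => 1 / C x y with hR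
  set d : V → V → ℝ := fun x y => i x y - N x y with hd
  have hdanti : ∀ x y, d x y = -d y x := fun x y => by
    simp only [hd]; rw [hianti x y, hNanti x y]; ring
  have hdsupp : ∀ x y, ¬G.Adj x y → d x y = 0 := fun x y h => by
    simp only [hd]; rw [hisupp x y h, hNsupp x y h]; ring
  have hddiv : ∀ x, x ≠ b → ∑ y, d x y = 0 := by
    intro x hxb
    simp only [hd, Finset.sum_sub_distrib]
    by_cases hxa : x = a
    · subst hxa; rw [hisrc, hNsrc]; ring
    · rw [hidiv x hxa (by simpa using hxb), hNdiv x hxa (by simpa using hxb)]; ring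
  have hdall := unit_flow_div_all (G := G) hab hdanti hddiv
  -- cross term vanishes
  have hcross : ∑ x, ∑ y, d x y * (N x y * R x y) = 0 := by
    have hpt : ∀ x y, d x y * (N x y * R x y) = φ x * d x y - φ y * d x y := by
      intro x y
      by_cases h : G.Adj x y
      · rw [hNφ x y h, hR]
        have hC : C x y ≠ 0 := (hpos x y h).ne'
        field_simp
      · rw [hdsupp x y h]; ring
    have hA : ∑ x, ∑ y, φ x * d x y = 0 := by
      refine Finset.sum_eq_zero fun x _ => ?_
      rw [← Finset.mul_sum, hdall x, mul_zero]
    have hB : ∑ x, ∑ y, φ y * d x y = 0 := by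
      rw [Finset.sum_comm]
      refine Finset.sum_eq_zero fun y _ => ?_
      rw [← Finset.mul_sum]
      have : ∑ x, d x y = 0 := by
        have h1 : ∑ x, d x y = ∑ x, -d y x := Finset.sum_congr rfl fun x _ => hdanti x y
        rw [h1, Finset.sum_neg_distrib, hdall y, neg_zero]
      rw [this, mul_zero]
    calc ∑ x, ∑ y, d x y * (N x y * R x y)
        = ∑ x, ∑ y, (φ x * d x y - φ y * d x y) := by
          exact Finset.sum_congr rfl fun x _ => Finset.sum_congr rfl fun y _ => hpt x y
      _ = (∑ x, ∑ y, φ x * d x y) - ∑ x, ∑ y, φ y * d x y := by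
          rw [← Finset.sum_sub_distrib]
          exact Finset.sum_congr rfl fun x _ => Finset.sum_sub_distrib _ _
      _ = 0 := by rw [hA, hB]; ring
  -- energy expansion
  have hexp : energyF R i = energyF R N + energyF R d
      + ∑ x, ∑ y, d x y * (N x y * R x y) := by
    simp only [energyF]
    have hpt : ∀ x y : V, (i x y) ^ 2 * R x y
        = (N x y) ^ 2 * R x y + (d x y) ^ 2 * R x y + 2 * (d x y * (N x y * R x y)) := by
      intro x y
      have : i x y = N x y + d x y := by simp [hd]
      rw [this]; ring
    calc (1/2 : ℝ) * ∑ x, ∑ y, (i x y) ^ 2 * R x y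
        = (1/2) * ∑ x, ∑ y, ((N x y) ^ 2 * R x y + (d x y) ^ 2 * R x y
            + 2 * (d x y * (N x y * R x y))) := by
          congr 1
          exact Finset.sum_congr rfl fun x _ => Finset.sum_congr rfl fun y _ => hpt x y
      _ = (1/2) * ((∑ x, ∑ y, (N x y) ^ 2 * R x y) + (∑ x, ∑ y, (d x y) ^ 2 * R x y)
            + 2 * ∑ x, ∑ y, d x y * (N x y * R x y)) := by
          simp only [Finset.sum_add_distrib, ← Finset.mul_sum]
          try ring
      _ = _ := by ring
  rw [hcross] at hexp
  have hRnn : ∀ x y, 0 ≤ (d x y) ^ 2 * R x y := by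
    intro x y
    by_cases h : G.Adj x y
    · exact mul_nonneg (sq_nonneg _) (le_of_lt (one_div_pos.mpr (hpos x y h)))
    · rw [hdsupp x y h]; norm_num
  have hEd : 0 ≤ energyF R d :=
    mul_nonneg (by norm_num)
      (Finset.sum_nonneg fun x _ => Finset.sum_nonneg fun y _ => hRnn x y)
  have hle : energyF R i ≤ energyF R N := hmin N ⟨hNanti, hNsupp, hNdiv, hNsrc⟩
  have hEd0 : energyF R d = 0 := le_antisymm (by linarith) hEd
  have hzero : ∑ x, ∑ y, (d x y) ^ 2 * R x y = 0 := by
    have := hEd0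
    rw [energyF] at this
    linarith
  have hdzero : ∀ x y, d x y = 0 := by
    intro x y
    have houter := (Finset.sum_eq_zero_iff_of_nonneg
      (fun x _ => Finset.sum_nonneg fun y _ => hRnn x y)).mp hzero x (Finset.mem_univ x)
    have hinner := (Finset.sum_eq_zero_iff_of_nonneg
      (fun y _ => hRnn x y)).mp houter y (Finset.mem_univ y)
    by_cases h : G.Adj x y
    · have hR0 : R x y ≠ 0 := (one_div_pos.mpr (hpos x y h)).ne'
      have := mul_eq_zero.mp hinner
      rcases this with h1 | h1
      · exact pow_eq_zero_iff (by norm_num) |>.mp h1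
      · exact absurd h1 hR0
    · exact hdsupp x y h
  funext x y
  have := hdzero x y
  simp only [hd] at this
  linarith

open scoped Classical in
lemma flow_le_one {G : SimpleGraph V} {C : V → V → ℝ} {a b : V}
    (hpos : ∀ x y, G.Adj x y → 0 < C x y)
    {N : V → V → ℝ} (hN : IsUnitFlowF G a {b} N) {φ : V → ℝ}
    (hNφ : ∀ x y, G.Adj x y → N x y = C x y * (φ x - φ y)) (hφb : ∀ z, φ b ≤ φ z)
    {x y : V} (hadj : G.Adj x y) (hlt : φ y < φ x) : N x y ≤ 1 := by
  obtain ⟨hanti, hsupp, hdiv, hsrc⟩ := hN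
  set p : V → Prop := fun z => φ y < φ z with hp
  set S : Finset V := Finset.univ.filter p with hS
  have hxS : x ∈ S := by simp [hS, hp, hlt]
  have hyS : y ∉ Finset.univ.filter (fun z => ¬ p z) → False := by
    intro h; exact h (by simp [hp])
  have hbS : ∀ z ∈ S, z ≠ b := by
    intro z hz hzb
    rw [hS, Finset.mem_filter] at hz
    have := hφb y
    rw [← hzb] at this
    exact absurd hz.2 (not_lt.mpr this)
  have hdivS : ∀ z ∈ S, ∑ w, N z w = if z = a then 1 else 0 := by
    intro z hz
    by_cases hza : z = a
    · subst hza; simp [hsrc]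
    · rw [hdiv z hza (by simpa using hbS z hz)]; simp [hza]
  have hT1 : ∑ z ∈ S, ∑ w, N z w ≤ 1 := by
    rw [Finset.sum_congr rfl hdivS, Finset.sum_ite_eq' S a (fun _ => (1:ℝ))]
    split_ifs <;> norm_num
  have hsplit : ∀ z, ∑ w, N z w
      = ∑ w ∈ Finset.univ.filter p, N z w + ∑ w ∈ Finset.univ.filter (fun w => ¬ p w), N z w :=
    fun z => (Finset.sum_filter_add_sum_filter_not Finset.univ p (N z)).symm
  have hSS : ∑ z ∈ S, ∑ w ∈ S, N z w = 0 := by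
    have h1 : ∑ z ∈ S, ∑ w ∈ S, N z w = ∑ w ∈ S, ∑ z ∈ S, N z w := Finset.sum_comm
    have h2 : ∑ w ∈ S, ∑ z ∈ S, N z w = -∑ w ∈ S, ∑ z ∈ S, N w z := by
      simp only [← Finset.sum_neg_distrib]
      exact Finset.sum_congr rfl fun w _ => Finset.sum_congr rfl fun z _ => hanti z w
    linarith [h1, h2]
  have hnn : ∀ z ∈ S, ∀ w ∈ Finset.univ.filter (fun w => ¬ p w), 0 ≤ N z w := by
    intro z hz w hw
    by_cases h : G.Adj z w
    · rw [hNφ z w h]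
      rw [hS, Finset.mem_filter] at hz
      rw [Finset.mem_filter] at hw
      have h1 : φ w ≤ φ y := not_lt.mp hw.2
      have h2 : φ y < φ z := hz.2
      exact mul_nonneg (hpos z w h).le (by linarith)
    · rw [hsupp z w h]
  have hkey : N x y ≤ ∑ z ∈ S, ∑ w ∈ Finset.univ.filter (fun w => ¬ p w), N z w := by
    have hyin : y ∈ Finset.univ.filter (fun w => ¬ p w) := by simp [hp]
    have h1 : N x y ≤ ∑ w ∈ Finset.univ.filter (fun w => ¬ p w), N x w :=
      Finset.single_le_sum (fun w hw => hnn x hxS w hw) hyin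
    refine le_trans h1 ?_
    exact Finset.single_le_sum
      (fun z hz => Finset.sum_nonneg fun w hw => hnn z hz w hw) hxS
  have hfinal : ∑ z ∈ S, ∑ w ∈ Finset.univ.filter (fun w => ¬ p w), N z w ≤ 1 := by
    have : ∑ z ∈ S, ∑ w, N z w
        = ∑ z ∈ S, ∑ w ∈ S, N z w
          + ∑ z ∈ S, ∑ w ∈ Finset.univ.filter (fun w => ¬ p w), N z w := by
      rw [← Finset.sum_add_distrib]
      exact Finset.sum_congr rfl fun z _ => hsplit z
    rw [this, hSS] at hT1
    linarith
  linarith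

open scoped Classical in
lemma flow_abs_le_one {G : SimpleGraph V} {C : V → V → ℝ} {a b : V}
    (hpos : ∀ x y, G.Adj x y → 0 < C x y)
    {N : V → V → ℝ} (hN : IsUnitFlowF G a {b} N) {φ : V → ℝ}
    (hNφ : ∀ x y, G.Adj x y → N x y = C x y * (φ x - φ y)) (hφb : ∀ z, φ b ≤ φ z)
    (x y : V) : |N x y| ≤ 1 := by
  by_cases hadj : G.Adj x y
  · rcases lt_trichotomy (φ y) (φ x) with h | h | h
    · have h1 := flow_le_one hpos hN hNφ hφb hadj h
      have h2 : 0 ≤ N x y := by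
        rw [hNφ x y hadj]
        exact mul_nonneg (hpos x y hadj).le (by linarith)
      rw [abs_le]; exact ⟨by linarith, h1⟩
    · rw [hNφ x y hadj, h]
      simp
    · have h1 := flow_le_one hpos hN hNφ hφb hadj.symm h
      have h2 : 0 ≤ N y x := by
        rw [hNφ y x hadj.symm]
        exact mul_nonneg (hpos y x hadj.symm).le (by linarith)
      have h3 : N x y = -N y x := hN.1 x y
      rw [abs_le, h3]; exact ⟨by linarith, by linarith⟩
  · rw [hN.2.1 x y hadj]
    simp
end Det

/-- the unit current `i` from `a` to `b` on a finite connected weighted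
graph equals the expected net number of crossings of each edge by the weighted random
walk started at `a` and stopped at `b`; in particular `|i(x,y)| ≤ 1`. -/
theorem stmt12 {V Ω : Type*} [Fintype V] [DecidableEq V] [MeasurableSpace V]
    [MeasurableSingletonClass V] {mΩ : MeasurableSpace Ω}
    (μ : Measure Ω) [IsProbabilityMeasure μ]
    (G : SimpleGraph V) (hconn : G.Connected)
    (C : V → V → ℝ) (hsym : ∀ x y, C x y = C y x)
    (hpos : ∀ x y, G.Adj x y → 0 < C x y)
    (a b : V) (hab : a ≠ b)
    (i : V → V → ℝ)
    (hi : IsUnitCurrent G a {b} (fun x y => 1 / C x y) i)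
    -- the weighted random walk on `(G, C)` started at `a`
    (X : ℕ → Ω → V) (hXmeas : ∀ t, Measurable (X t))
    (hX0 : ∀ᵐ ω ∂μ, X 0 ω = a)
    (ℱ : Filtration ℕ mΩ)
    (hℱ : ∀ t, ℱ t = ⨆ s ∈ Set.Iic t, MeasurableSpace.comap (X s) inferInstance)
    (hdyn : ∀ t y, μ[(fun ω => if X (t + 1) ω = y then (1 : ℝ) else 0) | ℱ t]
        =ᵐ[μ] fun ω => step G C (X t ω) y) :
    ∀ x y : V,
      i x y =
        (∑' t : ℕ, (μ {ω | X t ω = x ∧ X (t + 1) ω = y ∧ ∀ s, s ≤ t → X s ω ≠ b}).toReal)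
        - (∑' t : ℕ, (μ {ω | X t ω = y ∧ X (t + 1) ω = x ∧ ∀ s, s ≤ t → X s ω ≠ b}).toReal)
      ∧ |i x y| ≤ 1 := by
  classical
  intro x y
  set φ : V → ℝ := fun z => Stmt12.gre μ X b z / Stmt12.pi' G C z with hφ
  set N : V → V → ℝ := fun u v => Stmt12.Jf μ X b u v - Stmt12.Jf μ X b v u with hN
  have hJ : ∀ u v, Stmt12.Jf μ X b u v = step G C u v * Stmt12.gre μ X b u :=
    fun u v => Stmt12.Jf_eq hconn hpos hXmeas hdyn hℱ u v
  have hNanti : ∀ u v, N u v = -N v u := fun u v => by simp only [hN]; ring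
  have hNsupp : ∀ u v, ¬G.Adj u v → N u v = 0 := by
    intro u v h
    have h' : ¬G.Adj v u := fun h2 => h h2.symm
    simp only [hN, hJ, Stmt12.step_eq, h, h', if_false]
    ring
  have hNφ : ∀ u v, G.Adj u v → N u v = C u v * (φ u - φ v) := by
    intro u v h
    simp only [hN, hJ, Stmt12.step_eq, h, h.symm, if_true, hφ]
    rw [hsym v u]
    ring
  have hdivN : ∀ u, u ≠ b → ∑ w, N u w = if u = a then 1 else 0 := by
    intro u hub
    simp only [hN, Finset.sum_sub_distrib]
    rw [Stmt12.sum_Jf_right hconn hpos hXmeas hdyn hℱ u,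
      Stmt12.sum_Jf_left hconn hpos hXmeas hdyn hℱ hX0 hab hub]
    ring
  have hNflow : IsUnitFlowF G a {b} N := by
    refine ⟨hNanti, hNsupp, ?_, ?_⟩
    · intro u hua hub
      rw [hdivN u (by simpa using hub)]
      simp [hua]
    · rw [hdivN a hab]
      simp
  have hφb : ∀ z, φ b ≤ φ z := by
    intro z
    have h1 : φ b = 0 := by
      simp only [hφ, Stmt12.gre_b hconn hpos hXmeas hdyn hℱ, zero_div]
    rw [h1]
    exact div_nonneg (Stmt12.gre_nonneg hconn hpos hXmeas hdyn hℱ z)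
      (Stmt12.pi'_nonneg hpos z)
  have hieq : i = N := Det.current_eq hpos hab hi hNflow hNφ
  have hset : ∀ (u v : V) (t : ℕ),
      {ω | X t ω = u ∧ X (t + 1) ω = v ∧ ∀ s, s ≤ t → X s ω ≠ b}
        = Stmt12.Av X b t u ∩ {ω | X (t + 1) ω = v} := by
    intro u v t
    ext ω
    simp only [Stmt12.Av, Stmt12.noB, Set.mem_inter_iff, Set.mem_setOf_eq]
    tauto
  have htsum : ∀ (u v : V),
      (∑' t : ℕ, (μ {ω | X t ω = u ∧ X (t + 1) ω = v ∧ ∀ s, s ≤ t → X s ω ≠ b}).toReal)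
        = Stmt12.Jf μ X b u v := by
    intro u v
    rw [Stmt12.Jf]
    exact tsum_congr fun t => by rw [hset u v t]
  constructor
  · rw [hieq, htsum x y, htsum y x]
  · rw [hieq]
    exact Det.flow_abs_le_one hpos hNflow hNφ hφb x y

end
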